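/- arXiv:0906.0510 — 2 statements merged into one kernel-verified Lean document; each statement's English description precedes it below -/
import Mathlib

section
/- Let ξ be a real random variable with mean zero, variance 1, third moment E[ξ³] = α₃, and finite fourth moment E[ξ⁴] = α₄. Then α₄ − α₃² − 1 ≥ 0, with equality if and only if ξ is supported on exactly two points. Conversely, for any real numbers α₃, α₄ with α₄ − α₃² − 1 ≥ 0, there exists a real random variable with mean zero, variance 1, third moment α₃ and fourth moment α₄. -/
/-!
Put `c = ∫ x³`. Mean `0` and variance `1` give `∫ (x² - c x - 1)² = α₄ - α₃² - 1`, so the gap is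
nonnegative and vanishes iff `ξ` is a.s. a root of `x² - c x - 1`, which has two distinct real
roots; neither root carries all the mass, since a constant cannot have mean `0` and variance `1`.
Conversely, if `ξ ∈ {a, b}` a.s., integrating `ξ² = (a + b) ξ - a b` and `ξ³ = (a + b) ξ² - a b ξ`
gives `a b = -1` and `c = a + b`, so `x² - c x - 1 = (x - a)(x - b)` vanishes a.s.
For existence, let `a < 0 < b` be the roots of `x² - α₃ x - s` with `s = α₄ - α₃² ≥ 1`; the
mean-zero law on `{a, b}` has moments `s`, `s α₃`, `s α₄`, so mixing it with weight `1 / s` with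
the point mass at `0` gives the required law.
-/

open MeasureTheory

section AtomicMeasure

variable {α E ι : Type*} [MeasurableSpace α] [NormedAddCommGroup E] [Fintype ι]
  (w : ι → ℝ) (x : ι → α)

theorem integrable_sum_smul_dirac [MeasurableSingletonClass α] (f : α → E) :
    Integrable f (∑ i, ENNReal.ofReal (w i) • Measure.dirac (x i)) :=
  integrable_finsetSum_measure.2 fun _ _ ↦
    (integrable_dirac (by simp)).smul_measure ENNReal.ofReal_ne_top

theorem integral_sum_smul_dirac [MeasurableSingletonClass α] [NormedSpace ℝ E] [CompleteSpace E]
    (hw : ∀ i, 0 ≤ w i) (f : α → E) :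
    ∫ y, f y ∂(∑ i, ENNReal.ofReal (w i) • Measure.dirac (x i)) = ∑ i, w i • f (x i) := by
  rw [integral_finsetSum_measure fun _ _ ↦
    (integrable_dirac (by simp)).smul_measure ENNReal.ofReal_ne_top]
  simp [integral_smul_measure, integral_dirac, ENNReal.toReal_ofReal (hw _)]

theorem isProbabilityMeasure_sum_smul_dirac (hw : ∀ i, 0 ≤ w i) (hw₁ : ∑ i, w i = 1) :
    IsProbabilityMeasure (∑ i, ENNReal.ofReal (w i) • Measure.dirac (x i)) := by
  constructor
  simp [← ENNReal.ofReal_sum_of_nonneg fun i _ ↦ hw i, hw₁]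

end AtomicMeasure

theorem exists_neg_pos_add_eq_mul_eq_neg (c : ℝ) {d : ℝ} (hd : 0 < d) :
    ∃ a b : ℝ, a < 0 ∧ 0 < b ∧ a + b = c ∧ a * b = -d := by
  have hdisc : 0 ≤ c ^ 2 + 4 * d := by positivity
  have hr := Real.sq_sqrt hdisc
  have hc : |c| < √(c ^ 2 + 4 * d) := by
    rw [← Real.sqrt_sq_eq_abs]; exact Real.sqrt_lt_sqrt (sq_nonneg c) (by linarith)
  refine ⟨(c - √(c ^ 2 + 4 * d)) / 2, (c + √(c ^ 2 + 4 * d)) / 2, ?_, ?_, by ring, ?_⟩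
  · linarith [le_abs_self c]
  · linarith [neg_abs_le c]
  · linear_combination (-1 / 4 : ℝ) * hr

section Moments

variable {ν : Measure ℝ}

theorem integrable_pow_of_le [IsFiniteMeasure ν] {k n : ℕ} (hkn : k ≤ n)
    (h : Integrable (fun x : ℝ ↦ x ^ n) ν) : Integrable (fun x : ℝ ↦ x ^ k) ν := by
  have hk := integrable_norm_pow_of_le (f := fun x : ℝ ↦ x) aestronglyMeasurable_id hkn
    (by simpa only [norm_pow] using h.norm)
  exact (integrable_norm_iff (by fun_prop)).1 (by simpa only [norm_pow] using hk)

theorem integrable_sq_sub_mul_sub_one [IsFiniteMeasure ν] (h4 : Integrable (fun x : ℝ ↦ x ^ 4) ν)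
    (c : ℝ) :
    Integrable (fun x ↦ (x ^ 2 - c * x - 1) ^ 2) ν := by
  have h3 := integrable_pow_of_le (by norm_num : 3 ≤ 4) h4
  have h2 := integrable_pow_of_le (by norm_num : 2 ≤ 4) h4
  -- `fun_prop` has no rule for the identity, so the linear term is supplied by hand
  have h1 : Integrable (fun x ↦ 2 * c * x) ν :=
    (by simpa using integrable_pow_of_le (by norm_num : 1 ≤ 4) h4 :
      Integrable (fun x : ℝ ↦ x) ν).const_mul _
  refine Integrable.congr
    (f := fun x ↦ x ^ 4 - 2 * c * x ^ 3 + (c ^ 2 - 2) * x ^ 2 + 2 * c * x + 1)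
    (by fun_prop) (ae_of_all _ fun x ↦ by ring)

variable [IsProbabilityMeasure ν]

theorem moment_gap_eq_integral_sq (h4 : Integrable (fun x : ℝ ↦ x ^ 4) ν)
    (hmean : ∫ x, x ∂ν = 0) (hvar : ∫ x, x ^ 2 ∂ν = 1) :
    (∫ x, x ^ 4 ∂ν) - (∫ x, x ^ 3 ∂ν) ^ 2 - 1 =
      ∫ x, (x ^ 2 - (∫ x, x ^ 3 ∂ν) * x - 1) ^ 2 ∂ν := by
  set c := ∫ x, x ^ 3 ∂ν
  have h3 := integrable_pow_of_le (by norm_num : 3 ≤ 4) h4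
  have h2 := integrable_pow_of_le (by norm_num : 2 ≤ 4) h4
  have h1 : Integrable (fun x ↦ 2 * c * x) ν :=
    (by simpa using integrable_pow_of_le (by norm_num : 1 ≤ 4) h4 :
      Integrable (fun x : ℝ ↦ x) ν).const_mul _
  have hexp : ∀ x : ℝ, (x ^ 2 - c * x - 1) ^ 2 =
      x ^ 4 - 2 * c * x ^ 3 + (c ^ 2 - 2) * x ^ 2 + 2 * c * x + 1 := fun x ↦ by ring
  simp_rw [hexp]
  rw [integral_add, integral_add, integral_add, integral_sub, integral_const_mul,
    integral_const_mul, integral_const_mul, integral_const, hmean, hvar]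
  · simp only [mul_one, mul_zero, add_zero, probReal_univ, smul_eq_mul]
    ring
  all_goals fun_prop

theorem measure_singleton_ne_zero_of_ae_eq_or_eq (hmean : ∫ x, x ∂ν = 0)
    (hvar : ∫ x, x ^ 2 ∂ν = 1) {a b : ℝ} (hab : ∀ᵐ x ∂ν, x = a ∨ x = b) : ν {a} ≠ 0 := by
  intro ha
  have hb : ∀ᵐ x ∂ν, x = b := by
    filter_upwards [hab, measure_eq_zero_iff_ae_notMem.1 ha] with x hx hxa
    exact hx.resolve_left hxa
  have h1 : ∫ x, x ∂ν = b := by simp [integral_congr_ae hb]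
  have h2 : ∫ x, x ^ 2 ∂ν = b ^ 2 := by
    simp [integral_congr_ae (hb.mono fun x hx ↦ congrArg (· ^ 2) hx)]
  rw [hmean] at h1
  rw [hvar, ← h1] at h2
  norm_num at h2

theorem mul_eq_neg_one_and_integral_pow_three_of_ae_eq_or_eq
    (h2 : Integrable (fun x : ℝ ↦ x ^ 2) ν) (hmean : ∫ x, x ∂ν = 0) (hvar : ∫ x, x ^ 2 ∂ν = 1)
    {a b : ℝ} (hab : ∀ᵐ x ∂ν, x = a ∨ x = b) :
    a * b = -1 ∧ ∫ x, x ^ 3 ∂ν = a + b := by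
  have h1 : Integrable (fun x : ℝ ↦ x) ν := by
    simpa using integrable_pow_of_le (by norm_num : 1 ≤ 2) h2
  have hsq : ∀ᵐ x ∂ν, x ^ 2 = (a + b) * x - a * b := hab.mono fun x hx ↦ by
    rcases hx with rfl | rfl <;> ring
  have hcube : ∀ᵐ x ∂ν, x ^ 3 = (a + b) * x ^ 2 - a * b * x := hab.mono fun x hx ↦ by
    rcases hx with rfl | rfl <;> ring
  have hprod : a * b = -1 := by
    have := integral_congr_ae hsq
    rw [integral_sub (h1.const_mul _) (integrable_const _), integral_const_mul, integral_const,
      hmean, hvar] at this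
    simp only [mul_zero, probReal_univ, smul_eq_mul, one_mul, zero_sub] at this
    linarith
  refine ⟨hprod, ?_⟩
  rw [integral_congr_ae hcube, integral_sub (h2.const_mul _) (h1.const_mul _), integral_const_mul,
    integral_const_mul, hmean, hvar, hprod]
  ring

theorem moment_gap_nonneg (h4 : Integrable (fun x : ℝ ↦ x ^ 4) ν)
    (hmean : ∫ x, x ∂ν = 0) (hvar : ∫ x, x ^ 2 ∂ν = 1) :
    0 ≤ (∫ x, x ^ 4 ∂ν) - (∫ x, x ^ 3 ∂ν) ^ 2 - 1 := by
  rw [moment_gap_eq_integral_sq h4 hmean hvar]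
  exact integral_nonneg fun x ↦ sq_nonneg _

theorem moment_gap_eq_zero_iff (h4 : Integrable (fun x : ℝ ↦ x ^ 4) ν)
    (hmean : ∫ x, x ∂ν = 0) (hvar : ∫ x, x ^ 2 ∂ν = 1) :
    (∫ x, x ^ 4 ∂ν) - (∫ x, x ^ 3 ∂ν) ^ 2 - 1 = 0 ↔
      ∃ a b : ℝ, a ≠ b ∧ ν ({a, b}ᶜ) = 0 ∧ ν {a} ≠ 0 ∧ ν {b} ≠ 0 := by
  rw [moment_gap_eq_integral_sq h4 hmean hvar, integral_eq_zero_iff_of_nonneg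
    (fun x ↦ sq_nonneg _) (integrable_sq_sub_mul_sub_one h4 _)]
  constructor
  · intro hQ
    obtain ⟨a, b, ha, hb, hsum, hprod⟩ :=
      exists_neg_pos_add_eq_mul_eq_neg (∫ x, x ^ 3 ∂ν) one_pos
    have hab : ∀ᵐ x ∂ν, x = a ∨ x = b := hQ.mono fun x hx ↦ by
      have hx : (x - a) * (x - b) = 0 := by
        linear_combination (pow_eq_zero_iff two_ne_zero).1 hx - x * hsum + hprod
      simpa [sub_eq_zero] using hx
    exact ⟨a, b, (ha.trans hb).ne, ae_iff.1 hab,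
      measure_singleton_ne_zero_of_ae_eq_or_eq hmean hvar hab,
      measure_singleton_ne_zero_of_ae_eq_or_eq hmean hvar (hab.mono fun _ ↦ Or.symm)⟩
  · rintro ⟨a, b, -, hnull, -, -⟩
    have hab : ∀ᵐ x ∂ν, x = a ∨ x = b := ae_iff.2 hnull
    obtain ⟨hprod, hsum⟩ := mul_eq_neg_one_and_integral_pow_three_of_ae_eq_or_eq
      (integrable_pow_of_le (by norm_num) h4) hmean hvar hab
    filter_upwards [hab] with x hx
    rw [Pi.zero_apply, hsum]
    rcases hx with hx | hx <;> rw [hx] <;> linear_combination (a * b + 1) * hprod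

end Moments

theorem exists_probabilityMeasure_moments (α₃ α₄ : ℝ) (h : 0 ≤ α₄ - α₃ ^ 2 - 1) :
    ∃ ν : Measure ℝ, IsProbabilityMeasure ν ∧ Integrable (fun x ↦ x ^ 4) ν ∧
      (∫ x, x ∂ν) = 0 ∧ (∫ x, x ^ 2 ∂ν) = 1 ∧
      (∫ x, x ^ 3 ∂ν) = α₃ ∧ (∫ x, x ^ 4 ∂ν) = α₄ := by
  set s := α₄ - α₃ ^ 2 with hs
  have hs1 : 1 ≤ s := by linarith
  obtain ⟨a, b, ha, hb, hsum, hprod⟩ := exists_neg_pos_add_eq_mul_eq_neg α₃ (by linarith : 0 < s)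
  have hba : 0 < b - a := by linarith
  let w : Fin 3 → ℝ := ![b / (s * (b - a)), -a / (s * (b - a)), 1 - 1 / s]
  let x : Fin 3 → ℝ := ![a, b, 0]
  have hw : ∀ i, 0 ≤ w i := by
    intro i
    fin_cases i
    · exact div_nonneg hb.le (by positivity)
    · exact div_nonneg (by linarith) (by positivity)
    · simpa [w] using inv_le_one_of_one_le₀ hs1
  have hmoment (f : ℝ → ℝ) : ∫ y, f y ∂(∑ i, ENNReal.ofReal (w i) • Measure.dirac (x i)) =
      b / (s * (b - a)) * f a + -a / (s * (b - a)) * f b + (1 - 1 / s) * f 0 := by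
    rw [integral_sum_smul_dirac w x hw]
    simp [Fin.sum_univ_three, w, x]
  refine ⟨_, isProbabilityMeasure_sum_smul_dirac w x hw ?_, integrable_sum_smul_dirac w x _,
    ?_, ?_, ?_, ?_⟩
  · simp [Fin.sum_univ_three, w]
    field_simp
    ring
  all_goals rw [hmoment]; field_simp
  · ring
  · linear_combination (a - b) * hprod
  · linear_combination (a ^ 2 - b ^ 2) * hprod + s * (b - a) * hsum
  · linear_combination (a ^ 3 - b ^ 3 - s * (b - a)) * hprod + s * (b - a) * (a + b + α₃) * hsum
      + s * (b - a) * hs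

/-- **The truncated moment matching problem** (Lemma 1.27 of Tao-Vu): if `ξ` is a real random
variable (with law `ν`) with mean zero, variance `1`, third moment `α₃` and finite fourth
moment `α₄`, then `α₄ - α₃² - 1 ≥ 0`, with equality iff `ξ` is supported on exactly two
points.  Conversely, any `(α₃, α₄)` with `α₄ - α₃² - 1 ≥ 0` arises as the third and fourth
moments of a real random variable of mean zero and variance `1`. -/
theorem truncated_moment_problem :
    (∀ ν : Measure ℝ, IsProbabilityMeasure ν →
      Integrable (fun x => x ^ 4) ν →
      (∫ x, x ∂ν) = 0 → (∫ x, x ^ 2 ∂ν) = 1 →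
      0 ≤ (∫ x, x ^ 4 ∂ν) - (∫ x, x ^ 3 ∂ν) ^ 2 - 1 ∧
      ((∫ x, x ^ 4 ∂ν) - (∫ x, x ^ 3 ∂ν) ^ 2 - 1 = 0 ↔
        ∃ a b : ℝ, a ≠ b ∧ ν ({a, b}ᶜ) = 0 ∧ ν {a} ≠ 0 ∧ ν {b} ≠ 0)) ∧
    (∀ α₃ α₄ : ℝ, 0 ≤ α₄ - α₃ ^ 2 - 1 →
      ∃ ν : Measure ℝ, IsProbabilityMeasure ν ∧ Integrable (fun x => x ^ 4) ν ∧
        (∫ x, x ∂ν) = 0 ∧ (∫ x, x ^ 2 ∂ν) = 1 ∧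
        (∫ x, x ^ 3 ∂ν) = α₃ ∧ (∫ x, x ^ 4 ∂ν) = α₄) :=
  ⟨fun _ _ h4 hmean hvar ↦
    ⟨moment_gap_nonneg h4 hmean hvar, moment_gap_eq_zero_iff h4 hmean hvar⟩,
    exists_probabilityMeasure_moments⟩
end

section
/- Let A_n be an n×n Hermitian matrix of block form A_n = [[a, X*],[X, A_{n−1}]] for some a ∈ ℝ and X ∈ ℂ^{n−1}, where A_{n−1} is the bottom right (n−1)×(n−1) Hermitian block. Let (x, v) with x ∈ ℂ and v ∈ ℂ^{n−1} be a unit eigenvector of A_n with eigenvalue λ_i(A_n), and suppose that none of the eigenvalues of A_{n−1} equal λ_i(A_n). Then |x|² = 1 / (1 + Σ_{j=1}^{n−1} (λ_j(A_{n−1}) − λ_i(A_n))^{−2} |u_j(A_{n−1})* X|²), where u_j(A_{n−1}) is a unit eigenvector of A_{n−1} for the eigenvalue λ_j(A_{n−1}) and the u_j form an orthonormal basis. -/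
/-!
Write `w = (x, v)`. The last `n` rows of `A w = λ w` say `B v + x X = λ v`. In the orthonormal
eigenbasis `(u j)` of `B` this reads `(λ_j(B) - λ) (u j)* v = -x (u j)* X`, so by Parseval
`‖v‖² = |x|² Σ_j (λ_j(B) - λ)⁻² |(u j)* X|²`, and `|x|² + ‖v‖² = 1` gives the formula.
-/

/-- Sorted (increasing) eigenvalues of a Hermitian matrix (junk value `0` otherwise). -/
noncomputable def eig {n : ℕ} (A : Matrix (Fin n) (Fin n) ℂ) : Fin n → ℝ :=
  if h : A.IsHermitian then h.eigenvalues ∘ Tuple.sort h.eigenvalues else 0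

open Matrix

namespace Matrix

theorem star_mulVec_dotProduct_mulVec_conjTranspose {m R : Type*} [Fintype m] [DecidableEq m]
    [Semiring R] [StarRing R] {U : Matrix m m R} (hU : U * Uᴴ = 1) (v : m → R) :
    star (Uᴴ *ᵥ v) ⬝ᵥ (Uᴴ *ᵥ v) = star v ⬝ᵥ v := by
  rw [star_mulVec, conjTranspose_conjTranspose, ← dotProduct_mulVec, mulVec_mulVec, hU,
    one_mulVec]

theorem conjTranspose_mul_eq_diagonal_mul_conjTranspose {m R : Type*} [Fintype m]
    [DecidableEq m] [CommRing R] [StarRing R] {U B : Matrix m m R} {μ : m → R}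
    (hU : Uᴴ * U = 1) (hBU : B * U = U * diagonal μ) : Uᴴ * B = diagonal μ * Uᴴ :=
  calc Uᴴ * B = Uᴴ * B * (U * Uᴴ) := by rw [mul_eq_one_comm.mp hU, Matrix.mul_one]
    _ = Uᴴ * (B * U) * Uᴴ := by simp only [Matrix.mul_assoc]
    _ = diagonal μ * Uᴴ := by rw [hBU, ← Matrix.mul_assoc, hU, Matrix.one_mul]

theorem star_dotProduct_self_eq_sum_norm_sq {m 𝕜 : Type*} [Fintype m] [RCLike 𝕜]
    (v : m → 𝕜) : star v ⬝ᵥ v = ((∑ k, ‖v k‖ ^ 2 : ℝ) : 𝕜) := by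
  simp [dotProduct, RCLike.conj_mul]

theorem mulVec_succ {n : ℕ} {R : Type*} [NonUnitalNonAssocSemiring R]
    (A : Matrix (Fin (n + 1)) (Fin (n + 1)) R) (w : Fin (n + 1) → R) (j : Fin n) :
    (A *ᵥ w) j.succ = A j.succ 0 * w 0 + (A.submatrix Fin.succ Fin.succ *ᵥ Fin.tail w) j := by
  simp [mulVec, dotProduct, Fin.sum_univ_succ, Fin.tail]

end Matrix

theorem RCLike.norm_sq_eq_of_sub_mul_eq_neg_mul {𝕜 : Type*} [RCLike 𝕜] {r lam : ℝ}
    (hne : r ≠ lam) {c x d : 𝕜} (h : ((r : 𝕜) - lam) * c = -(x * d)) :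
    ‖c‖ ^ 2 = ‖x‖ ^ 2 * (((r - lam) ^ 2)⁻¹ * ‖d‖ ^ 2) := by
  have hnorm := congrArg (‖·‖ ^ 2) h
  simp only [norm_mul, norm_neg, mul_pow] at hnorm
  rw [← RCLike.ofReal_sub, RCLike.norm_ofReal, sq_abs] at hnorm
  have : (r - lam) ^ 2 ≠ 0 := pow_ne_zero 2 (sub_ne_zero.mpr hne)
  field_simp
  linarith

theorem sum_norm_sq_eq_of_mulVec_add_smul_eq {m 𝕜 : Type*} [Fintype m] [DecidableEq m]
    [RCLike 𝕜] {B U : Matrix m m 𝕜} {μ : m → ℝ} (hU : Uᴴ * U = 1)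
    (hBU : B * U = U * diagonal fun j ↦ (μ j : 𝕜)) {lam : ℝ} (hsep : ∀ j, μ j ≠ lam)
    {x : 𝕜} {X v : m → 𝕜} (hv : B *ᵥ v + x • X = (lam : 𝕜) • v) :
    ∑ k, ‖v k‖ ^ 2 = ‖x‖ ^ 2 * ∑ j, ((μ j - lam) ^ 2)⁻¹ * ‖(Uᴴ *ᵥ X) j‖ ^ 2 := by
  have hcoord : ∀ j, ((μ j : 𝕜) - lam) * (Uᴴ *ᵥ v) j = -(x * (Uᴴ *ᵥ X) j) := by
    intro j
    have hdiag : Uᴴ *ᵥ (B *ᵥ v) = (diagonal fun j ↦ (μ j : 𝕜)) *ᵥ (Uᴴ *ᵥ v) := by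
      rw [mulVec_mulVec, conjTranspose_mul_eq_diagonal_mul_conjTranspose hU hBU,
        ← mulVec_mulVec]
    have := congrFun (congrArg (Uᴴ *ᵥ ·) hv) j
    simp only [mulVec_add, mulVec_smul, hdiag, mulVec_diagonal, Pi.add_apply, Pi.smul_apply,
      smul_eq_mul] at this
    linear_combination this
  have hparseval := star_mulVec_dotProduct_mulVec_conjTranspose (mul_eq_one_comm.mp hU) v
  rw [star_dotProduct_self_eq_sum_norm_sq, star_dotProduct_self_eq_sum_norm_sq] at hparseval
  rw [← RCLike.ofReal_inj.mp hparseval, Finset.mul_sum]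
  exact Finset.sum_congr rfl fun j _ ↦ RCLike.norm_sq_eq_of_sub_mul_eq_neg_mul (hsep j) (hcoord j)

theorem eigenvector_first_coordinate_general
    (n : ℕ) (A : Matrix (Fin (n + 1)) (Fin (n + 1)) ℂ)
    (X : Fin n → ℂ) (B : Matrix (Fin n) (Fin n) ℂ)
    (hcol : ∀ j : Fin n, A j.succ 0 = X j)
    (hB : ∀ j k : Fin n, A j.succ k.succ = B j k)
    (i : Fin (n + 1)) (w : Fin (n + 1) → ℂ)
    (hw : A.mulVec w = (eig A i : ℂ) • w)
    (hunit : (∑ k, ‖w k‖ ^ 2) = 1)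
    (hsep : ∀ j : Fin n, eig B j ≠ eig A i)
    (u : Fin n → (Fin n → ℂ))
    (hu : ∀ j, B.mulVec (u j) = (eig B j : ℂ) • u j)
    (hON : ∀ j j' : Fin n,
      (∑ k, (starRingEnd ℂ) (u j k) * u j' k) = if j = j' then 1 else 0) :
    ‖w 0‖ ^ 2 =
      1 / (1 + ∑ j, ((eig B j - eig A i) ^ 2)⁻¹ *
        ‖∑ k, (starRingEnd ℂ) (u j k) * X k‖ ^ 2) := by
  set U : Matrix (Fin n) (Fin n) ℂ := (of u)ᵀ
  have hU : Uᴴ * U = 1 := by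
    ext j j'
    simpa [U, mul_apply, one_apply] using hON j j'
  have hBU : B * U = U * diagonal fun j ↦ (eig B j : ℂ) := by
    ext k j
    rw [mul_diagonal, mul_apply]
    simpa [U, mulVec, dotProduct, mul_comm] using congrFun (hu j) k
  have hBsub : A.submatrix Fin.succ Fin.succ = B := Matrix.ext hB
  have htail : B *ᵥ Fin.tail w + w 0 • X = (eig A i : ℂ) • Fin.tail w := by
    ext j
    simpa [mulVec_succ, hcol, hBsub, Fin.tail, add_comm, mul_comm] using congrFun hw j.succ
  have hsplit : ‖w 0‖ ^ 2 + ∑ j, ‖Fin.tail w j‖ ^ 2 = 1 := by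
    rwa [Fin.sum_univ_succ] at hunit
  rw [sum_norm_sq_eq_of_mulVec_add_smul_eq (μ := eig B) (lam := eig A i) hU hBU hsep htail]
    at hsplit
  rw [eq_div_iff (by positivity)]
  simpa [U, mulVec, dotProduct, mul_add] using hsplit

/-- **Formula for the first coordinate of an eigenvector** (Lemma 2.4 of Tao-Vu, after
Erdős-Schlein-Yau): let `A = [[a, X*], [X, B]]` be an `(n+1) × (n+1)` Hermitian matrix with
`a ∈ ℝ`, `X ∈ ℂⁿ`, and `B` Hermitian of size `n`.  Let `(x, v)` be a unit eigenvector of `A`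
with eigenvalue `λ_i(A)`, and suppose no eigenvalue of `B` equals `λ_i(A)`.  If `u₁, …, uₙ`
is an orthonormal basis of eigenvectors of `B`, then
`|x|² = 1 / (1 + Σⱼ (λⱼ(B) - λᵢ(A))⁻² |uⱼ* X|²)`. -/
theorem eigenvector_first_coordinate
    (n : ℕ) (A : Matrix (Fin (n + 1)) (Fin (n + 1)) ℂ) (hA : A.IsHermitian)
    (a : ℝ) (X : Fin n → ℂ) (B : Matrix (Fin n) (Fin n) ℂ)
    (ha : A 0 0 = (a : ℂ))
    (hcol : ∀ j : Fin n, A j.succ 0 = X j)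
    (hrow : ∀ j : Fin n, A 0 j.succ = (starRingEnd ℂ) (X j))
    (hB : ∀ j k : Fin n, A j.succ k.succ = B j k)
    (i : Fin (n + 1)) (w : Fin (n + 1) → ℂ)
    (hw : A.mulVec w = (eig A i : ℂ) • w)
    (hunit : (∑ k, ‖w k‖ ^ 2) = 1)
    (hsep : ∀ j : Fin n, eig B j ≠ eig A i)
    (u : Fin n → (Fin n → ℂ))
    (hu : ∀ j, B.mulVec (u j) = (eig B j : ℂ) • u j)
    (hON : ∀ j j' : Fin n,
      (∑ k, (starRingEnd ℂ) (u j k) * u j' k) = if j = j' then 1 else 0) :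
    ‖w 0‖ ^ 2 =
      1 / (1 + ∑ j, ((eig B j - eig A i) ^ 2)⁻¹ *
        ‖∑ k, (starRingEnd ℂ) (u j k) * X k‖ ^ 2) :=
  eigenvector_first_coordinate_general n A X B hcol hB i w hw hunit hsep u hu hON
end
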